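/- Fix an integer m ≥ 1, a nonempty subset C_r ⊆ {1,…,m}, and let Ω_r := diag(1_{C_r}) − (1/|C_r|) 1_{C_r} 1_{C_r}^T ∈ ℝ^{m×m}. Let M ∈ ℝ^{m×m} be symmetric positive definite, let P_r be the Moore–Penrose pseudoinverse of Ω_r M Ω_r, and set E_r := P_r M. Then every eigenvalue of E_r is 0 or 1, and trace(E_r) = rank(E_r) = |C_r| − 1. -/

import Mathlib

open Matrix

/-- The centering matrix `Ω_C = diag(1_C) − (1/|C|) 1_C 1_Cᵀ` associated with a cluster `C`. -/
noncomputable def Omega {m : ℕ} (C : Finset (Fin m)) : Matrix (Fin m) (Fin m) ℝ :=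
  Matrix.diagonal (fun i => if i ∈ C then (1 : ℝ) else 0) -
    (1 / (C.card : ℝ)) • Matrix.vecMulVec (fun i => if i ∈ C then (1 : ℝ) else 0)
      (fun i => if i ∈ C then (1 : ℝ) else 0)

/-- `P` is the Moore–Penrose pseudoinverse of `B`. -/
def IsMP {m : ℕ} (B P : Matrix (Fin m) (Fin m) ℝ) : Prop :=
  B * P * B = B ∧ P * B * P = P ∧ (B * P)ᵀ = B * P ∧ (P * B)ᵀ = P * B

/-- `lam` is a (complex) eigenvalue of the real matrix `A`. -/
def IsEigenvalue {m : ℕ} (A : Matrix (Fin m) (Fin m) ℝ) (lam : ℂ) : Prop :=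
  ∃ v : Fin m → ℂ, v ≠ 0 ∧ (A.map (fun a => (a : ℂ))).mulVec v = lam • v

/-!
`E = P M` is idempotent: `Ω` is an orthogonal projection, and the Moore–Penrose identities give
`P = Bᵀ Pᵀ P = P Pᵀ Bᵀ` for `B = Ω M Ω`, so `Ω P = P = P Ω` and `P M P = P B P = P`.
An idempotent has only the eigenvalues `0` and `1`, and its trace is its rank. Finally
`rank (P M) = rank P = rank (Ω M Ω) = rank Ω`, the last step because `M = Sᴴ S` with `S`
invertible, and `rank Ω = trace Ω = |C| - 1`.
-/

namespace Matrix

variable {n K : Type*} [Fintype n] [Field K]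

theorem trace_eq_rank_of_isIdempotentElem [DecidableEq n] {A : Matrix n n K}
    (hA : IsIdempotentElem A) : A.trace = A.rank := by
  have hf : IsIdempotentElem (toLin' A) := hA.map toLinAlgEquiv'
  rw [← trace_toLin'_eq, (LinearMap.IsIdempotentElem.isProj_range _ hf).trace]
  rfl

theorem eq_zero_or_one_of_isIdempotentElem_of_mulVec_eq_smul {A : Matrix n n K}
    (hA : IsIdempotentElem A) {v : n → K} (hv : v ≠ 0) {c : K} (h : A *ᵥ v = c • v) :
    c = 0 ∨ c = 1 := by
  refine IsIdempotentElem.iff_eq_zero_or_one.mp (smul_left_injective K hv ?_)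
  calc (c * c) • v = A *ᵥ (A *ᵥ v) := by rw [h, mulVec_smul, h, smul_smul]
    _ = c • v := by rw [mulVec_mulVec, hA.eq, h]

open scoped MatrixOrder ComplexOrder in
theorem rank_conjTranspose_mul_mul_of_posDef {k 𝕜 : Type*} [Fintype k] [DecidableEq n]
    [RCLike 𝕜] {M : Matrix n n 𝕜} (hM : M.PosDef) (A : Matrix n k 𝕜) :
    (Aᴴ * M * A).rank = A.rank := by
  obtain ⟨S, hS, rfl⟩ := CStarAlgebra.isStrictlyPositive_iff_eq_star_mul_self.mp
    hM.isStrictlyPositive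
  have hSA : Aᴴ * (star S * S) * A = (S * A)ᴴ * (S * A) := by
    rw [star_eq_conjTranspose, conjTranspose_mul]
    simp only [Matrix.mul_assoc]
  rw [hSA, rank_conjTranspose_mul_self,
    rank_mul_eq_right_of_isUnit_det _ _ ((isUnit_iff_isUnit_det S).mp hS)]

theorem dotProduct_self_eq_sum_of_isIdempotentElem {u : n → K} (hu : IsIdempotentElem u) :
    u ⬝ᵥ u = ∑ i, u i := by
  simp only [dotProduct, ← Pi.mul_apply, hu.eq]

section Centering

variable [DecidableEq n]

def centeringMatrix (u : n → K) : Matrix n n K :=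
  diagonal u - (u ⬝ᵥ u)⁻¹ • vecMulVec u u

theorem transpose_centeringMatrix (u : n → K) : (centeringMatrix u)ᵀ = centeringMatrix u := by
  simp [centeringMatrix, transpose_sub]

theorem isIdempotentElem_centeringMatrix {u : n → K} (hu : IsIdempotentElem u) :
    IsIdempotentElem (centeringMatrix u) := by
  have hDu : diagonal u *ᵥ u = u := by
    ext i; rw [mulVec_diagonal, ← Pi.mul_apply, hu.eq]
  have huD : u ᵥ* diagonal u = u := by
    ext i; rw [vecMul_diagonal, ← Pi.mul_apply, hu.eq]
  have hDD : diagonal u * diagonal u = diagonal u := by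
    rw [diagonal_mul_diagonal]
    exact congrArg diagonal hu.eq
  have hDV : diagonal u * vecMulVec u u = vecMulVec u u := by rw [mul_vecMulVec, hDu]
  have hVD : vecMulVec u u * diagonal u = vecMulVec u u := by rw [vecMulVec_mul, huD]
  have hVV : vecMulVec u u * vecMulVec u u = (u ⬝ᵥ u) • vecMulVec u u := by
    rw [vecMulVec_mul_vecMulVec, vecMulVec_smul]
  -- holds also for `u = 0`, where `(u ⬝ᵥ u)⁻¹ = 0`
  have hc : (u ⬝ᵥ u)⁻¹ * (u ⬝ᵥ u)⁻¹ * (u ⬝ᵥ u) = (u ⬝ᵥ u)⁻¹ := by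
    rcases eq_or_ne (u ⬝ᵥ u) 0 with h | h
    · simp [h]
    · field_simp
  rw [IsIdempotentElem, centeringMatrix, sub_mul, mul_sub, mul_sub, hDD, Matrix.mul_smul, hDV,
    Matrix.smul_mul, Matrix.smul_mul, Matrix.mul_smul, hVD, hVV, smul_smul, smul_smul, hc]
  abel

theorem trace_centeringMatrix {u : n → K} (hu : IsIdempotentElem u) (h : u ⬝ᵥ u ≠ 0) :
    (centeringMatrix u).trace = u ⬝ᵥ u - 1 := by
  rw [centeringMatrix, trace_sub, trace_smul, trace_diagonal, trace_vecMulVec,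
    ← dotProduct_self_eq_sum_of_isIdempotentElem hu, smul_eq_mul, inv_mul_cancel₀ h]

end Centering

end Matrix

theorem IsEigenvalue.eq_zero_or_one_of_isIdempotentElem {m : ℕ} {A : Matrix (Fin m) (Fin m) ℝ}
    (hA : IsIdempotentElem A) {lam : ℂ} (h : IsEigenvalue A lam) : lam = 0 ∨ lam = 1 := by
  obtain ⟨v, hv, hAv⟩ := h
  exact eq_zero_or_one_of_isIdempotentElem_of_mulVec_eq_smul
    (hA.map (Complex.ofRealHom.mapMatrix)) hv hAv

namespace IsMP

variable {m : ℕ} {B P : Matrix (Fin m) (Fin m) ℝ}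

theorem rank_eq (h : IsMP B P) : P.rank = B.rank := by
  obtain ⟨hBPB, hPBP, -, -⟩ := h
  refine le_antisymm ?_ ?_
  · calc P.rank = (P * B * P).rank := by rw [hPBP]
      _ ≤ (P * B).rank := rank_mul_le_left _ _
      _ ≤ B.rank := rank_mul_le_right _ _
  · calc B.rank = (B * P * B).rank := by rw [hBPB]
      _ ≤ (B * P).rank := rank_mul_le_left _ _
      _ ≤ P.rank := rank_mul_le_right _ _

theorem eq_transpose_mul (h : IsMP B P) : P = Bᵀ * (Pᵀ * P) := by
  obtain ⟨-, hPBP, -, hPB⟩ := h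
  calc P = P * B * P := hPBP.symm
    _ = Bᵀ * (Pᵀ * P) := by rw [← hPB, transpose_mul, mul_assoc]

theorem eq_mul_transpose (h : IsMP B P) : P = P * Pᵀ * Bᵀ := by
  obtain ⟨-, hPBP, hBP, -⟩ := h
  calc P = P * (B * P) := by rw [← mul_assoc, hPBP]
    _ = P * Pᵀ * Bᵀ := by rw [← hBP, transpose_mul, mul_assoc]

theorem isIdempotentElem_mul_of_conj {Ω M : Matrix (Fin m) (Fin m) ℝ} (hΩT : Ωᵀ = Ω)
    (hΩ : IsIdempotentElem Ω) (h : IsMP (Ω * M * Ω) P) : IsIdempotentElem (P * M) := by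
  have hΩBT : Ω * (Ω * M * Ω)ᵀ = (Ω * M * Ω)ᵀ := by
    simp only [transpose_mul, hΩT, ← mul_assoc, hΩ.eq]
  have hBTΩ : (Ω * M * Ω)ᵀ * Ω = (Ω * M * Ω)ᵀ := by
    simp only [transpose_mul, hΩT, mul_assoc, hΩ.eq]
  have hΩP : Ω * P = P := by
    rw [h.eq_transpose_mul, ← mul_assoc, hΩBT]
  have hPΩ : P * Ω = P := by
    rw [h.eq_mul_transpose, mul_assoc, hBTΩ]
  have hPMP : P * M * P = P := by
    calc P * M * P = (P * Ω) * M * (Ω * P) := by rw [hPΩ, hΩP]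
      _ = P * (Ω * M * Ω) * P := by simp only [mul_assoc]
      _ = P := h.2.1
  rw [IsIdempotentElem, ← mul_assoc, hPMP]

end IsMP

def indicatorVec {m : ℕ} (C : Finset (Fin m)) : Fin m → ℝ := fun i => if i ∈ C then 1 else 0

theorem isIdempotentElem_indicatorVec {m : ℕ} (C : Finset (Fin m)) :
    IsIdempotentElem (indicatorVec C) := by
  ext i; by_cases hi : i ∈ C <;> simp [indicatorVec, hi]

theorem dotProduct_self_indicatorVec {m : ℕ} (C : Finset (Fin m)) :
    indicatorVec C ⬝ᵥ indicatorVec C = C.card := by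
  rw [dotProduct_self_eq_sum_of_isIdempotentElem (isIdempotentElem_indicatorVec C)]
  simp [indicatorVec]

theorem Omega_eq_centeringMatrix {m : ℕ} (C : Finset (Fin m)) :
    Omega C = centeringMatrix (indicatorVec C) := by
  rw [centeringMatrix, dotProduct_self_indicatorVec, ← one_div]
  rfl

theorem transpose_Omega {m : ℕ} (C : Finset (Fin m)) : (Omega C)ᵀ = Omega C := by
  rw [Omega_eq_centeringMatrix, transpose_centeringMatrix]

theorem isIdempotentElem_Omega {m : ℕ} (C : Finset (Fin m)) : IsIdempotentElem (Omega C) := by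
  rw [Omega_eq_centeringMatrix]
  exact isIdempotentElem_centeringMatrix (isIdempotentElem_indicatorVec C)

theorem rank_Omega {m : ℕ} {C : Finset (Fin m)} (hC : C.Nonempty) :
    (Omega C).rank = C.card - 1 := by
  have hcard : (C.card : ℝ) ≠ 0 := by exact_mod_cast hC.card_pos.ne'
  have htrace := trace_centeringMatrix (isIdempotentElem_indicatorVec C)
    (dotProduct_self_indicatorVec C ▸ hcard)
  rw [← Omega_eq_centeringMatrix, trace_eq_rank_of_isIdempotentElem (isIdempotentElem_Omega C),
    dotProduct_self_indicatorVec] at htrace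
  exact_mod_cast htrace.trans (Nat.cast_pred hC.card_pos).symm

theorem Er_trace_rank_general (m : ℕ) (C : Finset (Fin m)) (hC : C.Nonempty)
    (M : Matrix (Fin m) (Fin m) ℝ) (hM : M.PosDef)
    (P : Matrix (Fin m) (Fin m) ℝ) (hP : IsMP (Omega C * M * Omega C) P)
    (E : Matrix (Fin m) (Fin m) ℝ) (hE : E = P * M) :
    (∀ lam : ℂ, IsEigenvalue E lam → lam = 0 ∨ lam = 1) ∧
    Matrix.trace E = (C.card : ℝ) - 1 ∧
    E.rank = C.card - 1 := by
  have hE_idem : IsIdempotentElem E :=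
    hE ▸ hP.isIdempotentElem_mul_of_conj (transpose_Omega C) (isIdempotentElem_Omega C)
  have hΩMΩ : Omega C * M * Omega C = (Omega C)ᴴ * M * Omega C := by
    rw [conjTranspose_eq_transpose_of_trivial, transpose_Omega]
  have hrank : E.rank = C.card - 1 := by
    rw [hE, rank_mul_eq_left_of_isUnit_det _ _ ((isUnit_iff_isUnit_det M).mp hM.isUnit),
      hP.rank_eq, hΩMΩ, rank_conjTranspose_mul_mul_of_posDef hM, rank_Omega hC]
  refine ⟨fun lam h => h.eq_zero_or_one_of_isIdempotentElem hE_idem, ?_, hrank⟩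
  rw [trace_eq_rank_of_isIdempotentElem hE_idem, hrank, Nat.cast_pred hC.card_pos]

/-- Every eigenvalue of `E_r = P_r M` is `0` or `1`, and
`trace(E_r) = rank(E_r) = |C_r| − 1`. -/
theorem Er_trace_rank (m : ℕ) (hm : 1 ≤ m) (C : Finset (Fin m)) (hC : C.Nonempty)
    (M : Matrix (Fin m) (Fin m) ℝ) (hM : M.PosDef)
    (P : Matrix (Fin m) (Fin m) ℝ) (hP : IsMP (Omega C * M * Omega C) P)
    (E : Matrix (Fin m) (Fin m) ℝ) (hE : E = P * M) :
    (∀ lam : ℂ, IsEigenvalue E lam → lam = 0 ∨ lam = 1) ∧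
    Matrix.trace E = (C.card : ℝ) - 1 ∧
    E.rank = C.card - 1 :=
  Er_trace_rank_general m C hC M hM P hP E hE
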